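/- arXiv:2208.02903 — 2 statements merged into one kernel-verified Lean document; each statement's English description precedes it below -/
import Mathlib

section
/- Every measurable ℍ-independent subset of {0,1}^ℕ has measure zero with respect to the uniform product measure; consequently {0,1}^ℕ cannot be partitioned into countably many measurable ℍ-independent sets. -/
/-- The infinite-dimensional hypercube graph on `{0,1}^ℕ`:
two bit strings are adjacent iff they differ in exactly one coordinate. -/
def hypercube : SimpleGraph (ℕ → Bool) where
  Adj x y := ∃! n, x n ≠ y n
  symm := by
    constructor
    rintro x y ⟨n, hn, hu⟩
    exact ⟨n, hn.symm, fun m hm => hu m hm.symm⟩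
  loopless := by
    constructor
    rintro x ⟨n, hn, -⟩
    exact hn rfl

open MeasureTheory

/-- A set of vertices is independent in the hypercube graph if no edge joins two of its
members. -/
def HIndependent (I : Set (ℕ → Bool)) : Prop :=
  ∀ x ∈ I, ∀ y ∈ I, ¬ hypercube.Adj x y

/-!
Flipping a single coordinate `k` preserves `μ` and moves every point of an independent set `I`
out of `I`, its image being adjacent to it. Approximate `I` within `ε` by a set `A` depending on
finitely many coordinates and flip a coordinate `k` that `A` ignores: a point of `I ∩ A` is sent
into `A \ I`, so `I ⊆ (I \ A) ∪ flip_k⁻¹ (A \ I)` and `μ I ≤ μ (I ∆ A) < ε`.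
-/

open scoped symmDiff

section Flip

variable {ι : Type*} [DecidableEq ι]

def flipAt (k : ι) (x : ι → Bool) : ι → Bool := Function.update x k (!x k)

lemma measurable_flipAt (k : ι) : Measurable (flipAt k) := by
  unfold flipAt; fun_prop

lemma flipAt_apply_of_ne {k i : ι} (h : i ≠ k) (x : ι → Bool) : flipAt k x i = x i :=
  Function.update_of_ne h _ _

lemma restrict_flipAt_of_notMem {s : Finset ι} {k : ι} (hk : k ∉ s) (x : ι → Bool) :
    s.restrict (flipAt k x) = s.restrict x := by
  ext ⟨i, hi⟩
  exact flipAt_apply_of_ne (ne_of_mem_of_not_mem hi hk) x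

lemma preimage_flipAt_cylinder_of_notMem {s : Finset ι} {k : ι} (hk : k ∉ s)
    (S : Set (s → Bool)) : flipAt k ⁻¹' cylinder s S = cylinder s S := by
  ext x
  simp only [Set.mem_preimage, mem_cylinder, restrict_flipAt_of_notMem hk]

end Flip

lemma preimage_flipAt_cylinder (k n : ℕ) (x : ℕ → Bool) :
    flipAt k ⁻¹' PiNat.cylinder x n = PiNat.cylinder (flipAt k x) n := by
  ext y
  simp only [Set.mem_preimage, PiNat.mem_cylinder_iff]
  refine forall₂_congr fun i _ => ?_
  by_cases hik : i = k
  · subst hik; simp [flipAt]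
  · simp only [flipAt_apply_of_ne hik]

section PrefixCylinders

variable {E : ℕ → Type*}

lemma isPiSystem_piNat_cylinders :
    IsPiSystem {s : Set (∀ n, E n) | ∃ x n, s = PiNat.cylinder x n} := by
  rintro _ ⟨x, m, rfl⟩ _ ⟨y, n, rfl⟩ ⟨z, hzx, hzy⟩
  rw [PiNat.mem_cylinder_iff_eq] at hzx hzy
  rcases le_total m n with hmn | hnm
  · refine ⟨y, n, Set.inter_eq_right.2 ?_⟩
    rw [← hzx, ← hzy]
    exact PiNat.cylinder_anti z hmn
  · refine ⟨x, m, Set.inter_eq_left.2 ?_⟩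
    rw [← hzx, ← hzy]
    exact PiNat.cylinder_anti z hnm

variable [∀ n, TopologicalSpace (E n)] [∀ n, DiscreteTopology (E n)]
  [∀ n, SecondCountableTopology (E n)] [∀ n, MeasurableSpace (E n)] [∀ n, BorelSpace (E n)]

lemma generateFrom_piNat_cylinders :
    MeasurableSpace.generateFrom {s : Set (∀ n, E n) | ∃ x n, s = PiNat.cylinder x n} =
      MeasurableSpace.pi :=
  (borel_eq_generateFrom_of_subbasis
    (PiNat.isTopologicalBasis_cylinders E).eq_generateFrom).symm.trans BorelSpace.measurable_eq.symm

end PrefixCylinders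

lemma measurePreserving_flipAt {μ : Measure (ℕ → Bool)} [IsFiniteMeasure μ]
    (hμ : ∀ x y n, μ (PiNat.cylinder x n) = μ (PiNat.cylinder y n)) (k : ℕ) :
    MeasurePreserving (flipAt k) μ μ := by
  refine ⟨measurable_flipAt k, ext_of_generate_finite _ generateFrom_piNat_cylinders.symm
    isPiSystem_piNat_cylinders ?_ ?_⟩
  · rintro _ ⟨x, n, rfl⟩
    rw [Measure.map_apply (measurable_flipAt k) (PiNat.isOpen_cylinder _ x n).measurableSet,
      preimage_flipAt_cylinder, hμ]
  · rw [Measure.map_apply (measurable_flipAt k) .univ, Set.preimage_univ]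

lemma MeasureTheory.MeasurePreserving.measure_le_measure_symmDiff_of_disjoint_preimage
    {X : Type*} [MeasurableSpace X] {μ : Measure X} {f : X → X} (hf : MeasurePreserving f μ μ)
    {I A : Set X} (hI : MeasurableSet I) (hA : MeasurableSet A) (hfA : f ⁻¹' A = A)
    (hdisj : Disjoint I (f ⁻¹' I)) : μ I ≤ μ (I ∆ A) := by
  have hcover : I ⊆ (I \ A) ∪ f ⁻¹' (A \ I) := by
    intro x hx
    by_cases hxA : x ∈ A
    · exact Or.inr ⟨show x ∈ f ⁻¹' A by rwa [hfA], Set.disjoint_left.1 hdisj hx⟩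
    · exact Or.inl ⟨hx, hxA⟩
  calc μ I ≤ μ (I \ A) + μ (f ⁻¹' (A \ I)) := (measure_mono hcover).trans (measure_union_le _ _)
    _ = μ (I ∆ A) := by
      rw [hf.measure_preimage (hA.diff hI).nullMeasurableSet,
        measure_symmDiff_eq hI.nullMeasurableSet hA.nullMeasurableSet]

theorem measure_eq_zero_of_disjoint_preimage_flipAt {ι : Type*} [DecidableEq ι] [Infinite ι]
    {μ : Measure (ι → Bool)} [IsFiniteMeasure μ] (hμ : ∀ k, MeasurePreserving (flipAt k) μ μ)
    {I : Set (ι → Bool)} (hI : MeasurableSet I) (hdisj : ∀ k, Disjoint I (flipAt k ⁻¹' I)) :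
    μ I = 0 := by
  have hdense := Measure.MeasureDense.of_generateFrom_isSetAlgebra_finite μ
    isSetAlgebra_measurableCylinders generateFrom_measurableCylinders.symm
  refine le_antisymm (ENNReal.le_of_forall_pos_le_add fun ε hε _ => ?_) zero_le
  obtain ⟨A, hA, hIA⟩ := hdense.approx I hI (measure_ne_top μ I) ε hε
  obtain ⟨s, S, hS, rfl⟩ := (mem_measurableCylinders A).1 hA
  obtain ⟨k, hk⟩ := Infinite.exists_notMem_finset s
  calc μ I ≤ μ (I ∆ cylinder s S) :=
        (hμ k).measure_le_measure_symmDiff_of_disjoint_preimage hI hS.cylinder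
          (preimage_flipAt_cylinder_of_notMem hk S) (hdisj k)
    _ ≤ 0 + ε := by rw [zero_add, ← ENNReal.ofReal_coe_nnreal]; exact hIA.le

lemma hypercube_adj_flipAt (k : ℕ) (x : ℕ → Bool) : hypercube.Adj x (flipAt k x) := by
  refine ⟨k, by simp [flipAt], fun i hi => ?_⟩
  by_contra hik
  exact hi (flipAt_apply_of_ne hik x).symm

lemma HIndependent.disjoint_preimage_flipAt {I : Set (ℕ → Bool)} (hI : HIndependent I) (k : ℕ) :
    Disjoint I (flipAt k ⁻¹' I) :=
  Set.disjoint_left.2 fun x hx hfx => hI x hx _ hfx (hypercube_adj_flipAt k x)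

/-- With respect to the uniform product measure (coordinates are i.i.d. fair bits), every
measurable hypercube-independent set is null; consequently `{0,1}^ℕ` is not a countable
union of measurable independent sets. -/
theorem hypercube_measurable_independent_null (μ : Measure (ℕ → Bool))
    [IsProbabilityMeasure μ]
    (hμ : ∀ (n : ℕ) (a : ℕ → Bool), μ {x | ∀ i < n, x i = a i} = (1 / 2 : ENNReal) ^ n) :
    (∀ I : Set (ℕ → Bool), MeasurableSet I → HIndependent I → μ I = 0) ∧
      ¬ ∃ f : ℕ → Set (ℕ → Bool),
          (∀ n, MeasurableSet (f n) ∧ HIndependent (f n)) ∧ (⋃ n, f n) = Set.univ := by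
  have hflip k : MeasurePreserving (flipAt k) μ μ :=
    measurePreserving_flipAt (fun x y n => (hμ n x).trans (hμ n y).symm) k
  have hnull I (hI : MeasurableSet I) (hind : HIndependent I) : μ I = 0 :=
    measure_eq_zero_of_disjoint_preimage_flipAt hflip hI hind.disjoint_preimage_flipAt
  refine ⟨hnull, fun ⟨f, hf, hcover⟩ => ?_⟩
  have h : μ (⋃ n, f n) = 0 := measure_iUnion_null fun n => hnull (f n) (hf n).1 (hf n).2
  simp [hcover] at h
end

section
/- Every ℍ-independent subset of {0,1}^ℕ with the Baire property is meager; consequently {0,1}^ℕ cannot be partitioned into countably many Baire-measurable ℍ-independent sets, so the Baire-measurable chromatic number of ℍ is uncountable. -/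
open Filter Topology

section BaireSpace

variable {X : Type*} [TopologicalSpace X]

theorem BaireMeasurableSet.exists_isOpen_nonempty_isMeagre_diff {s : Set X}
    (hs : BaireMeasurableSet s) (hns : ¬IsMeagre s) :
    ∃ u, IsOpen u ∧ u.Nonempty ∧ IsMeagre (u \ s) := by
  obtain ⟨u, hu, hsu⟩ := hs.residualEq_isOpen
  refine ⟨u, hu, Set.nonempty_iff_ne_empty.2 ?_, hsu.mem_iff.mono fun x hx h => h.2 (hx.2 h.1)⟩
  rintro rfl
  exact hns (hsu.mem_iff.mono fun x hx h => hx.1 h)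

theorem exists_mem_and_map_mem_of_isMeagre_diff [BaireSpace X] {f : X → X}
    (hc : Continuous f) (ho : IsOpenMap f) {u s : Set X} (hu : IsOpen u) (hus : IsMeagre (u \ s))
    {x : X} (hx : x ∈ u) (hfx : f x ∈ u) : ∃ y ∈ s, f y ∈ s := by
  set v := u ∩ f ⁻¹' u
  have hv : ¬IsMeagre v := not_isMeagre_of_isOpen (hu.inter (hu.preimage hc)) ⟨x, hx, hfx⟩
  have hvs : IsMeagre (v \ (s ∩ f ⁻¹' s)) := by
    refine (hus.union (hus.preimage_of_isOpenMap hc ho)).mono ?_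
    rintro y ⟨⟨hyu, hfyu⟩, hys⟩
    by_cases hy : y ∈ s
    · exact Or.inr ⟨hfyu, fun hfy => hys ⟨hy, hfy⟩⟩
    · exact Or.inl ⟨hyu, hy⟩
  obtain ⟨y, -, hy, hfy⟩ := nonempty_of_not_isMeagre fun h =>
    hv (Set.sdiff_union_inter v _ ▸ hvs.union h)
  exact ⟨y, hy, hfy⟩

end BaireSpace

section FlipBit

variable {ι : Type*} [DecidableEq ι]

def flipBit (i : ι) (x : ι → Bool) : ι → Bool :=
  Function.update x i (!x i)

theorem flipBit_involutive (i : ι) : Function.Involutive (flipBit i) := by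
  intro x
  ext j
  by_cases h : j = i <;> simp [flipBit, Function.update_apply, h]

theorem continuous_flipBit (i : ι) : Continuous (flipBit i) :=
  continuous_id.update i ((continuous_of_discreteTopology (f := not)).comp (continuous_apply i))

theorem isOpenMap_flipBit (i : ι) : IsOpenMap (flipBit i) := fun _ hs => by
  rw [(flipBit_involutive i).image_eq_preimage_symm]
  exact hs.preimage (continuous_flipBit i)

theorem tendsto_flipBit_cofinite (x : ι → Bool) :
    Tendsto (flipBit · x) cofinite (𝓝 x) :=
  tendsto_pi_nhds.2 fun j => tendsto_const_nhds.congr' <|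
    (eventually_cofinite_ne j).mono fun _ hij => (Function.update_of_ne hij.symm _ x).symm

end FlipBit

theorem hypercube_adj_flipBit (n : ℕ) (x : ℕ → Bool) : hypercube.Adj x (flipBit n x) := by
  refine ⟨n, by simp [flipBit], fun m hm => ?_⟩
  by_contra hmn
  exact hm (Function.update_of_ne hmn _ x).symm

theorem HIndependent.isMeagre {I : Set (ℕ → Bool)} (hI : HIndependent I)
    (hB : BaireMeasurableSet I) : IsMeagre I := by
  by_contra hns
  obtain ⟨u, hu, ⟨x, hx⟩, huI⟩ := hB.exists_isOpen_nonempty_isMeagre_diff hns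
  obtain ⟨n, hn⟩ := ((tendsto_flipBit_cofinite x).eventually (hu.mem_nhds hx)).exists
  obtain ⟨y, hy, hfy⟩ := exists_mem_and_map_mem_of_isMeagre_diff (continuous_flipBit n)
    (isOpenMap_flipBit n) hu huI hx hn
  exact hI y hy _ hfy (hypercube_adj_flipBit n y)

/-- Every hypercube-independent set with the Baire property is meager; consequently `{0,1}^ℕ`
cannot be partitioned into countably many Baire-measurable independent sets (so the
Baire-measurable chromatic number of the hypercube is uncountable). -/
theorem hypercube_baire_independent_meager :
    (∀ I : Set (ℕ → Bool), BaireMeasurableSet I → HIndependent I → IsMeagre I) ∧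
      ¬ ∃ f : ℕ → Set (ℕ → Bool),
          (∀ n, BaireMeasurableSet (f n) ∧ HIndependent (f n)) ∧ (⋃ n, f n) = Set.univ := by
  refine ⟨fun I hB hI => hI.isMeagre hB, ?_⟩
  rintro ⟨f, hf, hcover⟩
  have hmeagre : IsMeagre (⋃ n, f n) := isMeagre_iUnion fun n => (hf n).2.isMeagre (hf n).1
  exact not_isMeagre_of_isOpen isOpen_univ Set.univ_nonempty (hcover ▸ hmeagre)
end
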